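/- Let n ≥ 2 and let f : {0,1}^n → {0,1} be a monotone read-once DNF with m terms in which every term contains more than 2·log₂(n) variables. Under unit costs and the uniform distribution: (i) there is a non-adaptive strategy with expected cost at most 3·m·log₂(n); (ii) OPT_A(f) ≥ m/2; consequently OPT_N(f) ≤ 6·log₂(n) · OPT_A(f). -/

import Mathlib

open Finset

/-- The set of tested indices `T` determines `f` on input `x`:
every input agreeing with `x` on `T` gives the same function value. -/
def Determines (n : ℕ) (f : (Fin n → Bool) → Bool) (T : Finset (Fin n))
    (x : Fin n → Bool) : Prop :=
  ∀ x' : Fin n → Bool, (∀ i ∈ T, x' i = x i) → f x' = f x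

/-- The set of indices tested by the non-adaptive strategy `π` in its first `k` tests. -/
def prefixSet (n : ℕ) (π : Equiv.Perm (Fin n)) (k : ℕ) : Finset (Fin n) :=
  Finset.univ.filter (fun i => (π.symm i).val < k)

/-- The number of tests performed by the non-adaptive strategy `π` on input `x`:
the least `k` such that the first `k` tested indices determine `f` on `x`. -/
noncomputable def naSteps (n : ℕ) (f : (Fin n → Bool) → Bool)
    (π : Equiv.Perm (Fin n)) (x : Fin n → Bool) : ℕ :=
  sInf {k : ℕ | Determines n f (prefixSet n π k) x}

/-- The cost incurred by the non-adaptive strategy `π` on input `x`, with cost vector `c`. -/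
noncomputable def naCost (n : ℕ) (f : (Fin n → Bool) → Bool) (c : Fin n → ℝ)
    (π : Equiv.Perm (Fin n)) (x : Fin n → Bool) : ℝ :=
  ∑ i ∈ prefixSet n π (naSteps n f π x), c i

/-- Probability of the outcome `x` under the product distribution with parameters `p`. -/
def prodWeight (n : ℕ) (p : Fin n → ℝ) (x : Fin n → Bool) : ℝ :=
  ∏ i : Fin n, if x i then p i else 1 - p i

/-- Expected cost of the non-adaptive strategy `π`. -/
noncomputable def naExpCost (n : ℕ) (f : (Fin n → Bool) → Bool) (c : Fin n → ℝ)
    (p : Fin n → ℝ) (π : Equiv.Perm (Fin n)) : ℝ :=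
  ∑ x : Fin n → Bool, prodWeight n p x * naCost n f c π x

/-- Optimal expected cost among non-adaptive strategies. -/
noncomputable def OPTN (n : ℕ) (f : (Fin n → Bool) → Bool) (c : Fin n → ℝ)
    (p : Fin n → ℝ) : ℝ :=
  sInf { r : ℝ | ∃ π : Equiv.Perm (Fin n), r = naExpCost n f c p π }

/-- Binary decision trees over `n` variables (adaptive strategies). -/
inductive DecTree (n : ℕ) : Type
  | leaf : Bool → DecTree n
  | node : Fin n → DecTree n → DecTree n → DecTree n

/-- Evaluation of a decision tree on an input. -/
def DecTree.eval {n : ℕ} : DecTree n → (Fin n → Bool) → Bool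
  | .leaf b, _ => b
  | .node i t0 t1, x => if x i then DecTree.eval t1 x else DecTree.eval t0 x

/-- Cost of a decision tree on input `x`: the sum of the costs of the indices
labeling the internal nodes on the root-to-leaf path followed on `x`. -/
def DecTree.costOn {n : ℕ} (c : Fin n → ℝ) : DecTree n → (Fin n → Bool) → ℝ
  | .leaf _, _ => 0
  | .node i t0 t1, x =>
      c i + (if x i then DecTree.costOn c t1 x else DecTree.costOn c t0 x)

/-- The decision tree `t` computes the function `f`. -/
def DecTree.Computes {n : ℕ} (t : DecTree n) (f : (Fin n → Bool) → Bool) : Prop :=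
  ∀ x, t.eval x = f x

/-- Expected cost of an adaptive strategy (decision tree). -/
noncomputable def adExpCost (n : ℕ) (c : Fin n → ℝ) (p : Fin n → ℝ)
    (t : DecTree n) : ℝ :=
  ∑ x : Fin n → Bool, prodWeight n p x * DecTree.costOn c t x

/-- Optimal expected cost among adaptive strategies computing `f`. -/
noncomputable def OPTA (n : ℕ) (f : (Fin n → Bool) → Bool) (c : Fin n → ℝ)
    (p : Fin n → ℝ) : ℝ :=
  sInf { r : ℝ | ∃ t : DecTree n, DecTree.Computes t f ∧ r = adExpCost n c p t }

/-- `f` is the monotone read-once DNF whose terms are the (nonempty, pairwise disjoint)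
sets of variables `T 0, …, T (m-1)`. -/
def IsReadOnceDNF (n m : ℕ) (T : Fin m → Finset (Fin n))
    (f : (Fin n → Bool) → Bool) : Prop :=
  (∀ j, (T j).Nonempty) ∧
  (∀ j k, j ≠ k → Disjoint (T j) (T k)) ∧
  (∀ x, f x = true ↔ ∃ j, ∀ i ∈ T j, x i = true)

/-!
The non-adaptive strategy is round robin: round `r` tests the variable of rank `r` of every term,
and `f` is determined once every term is refuted by a zero or completely tested. A term survives
`t` rounds only if its first `t` variables are ones, so the number `R` of rounds satisfies
`Pr[R > t] ≤ min(1, m 2^{-t})`, whence `E[R] ≤ ⌈log₂ n⌉ + 2m/n`. A round costs at most `m` tests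
and `3m ≤ n` (every term has at least three variables), so the expected cost is at most
`3 m log₂ n`.

An adaptive strategy must read a variable of every term on an input where `f` is false, so it
pays at least `m` there; and `Pr[f = 1] ≤ m / n² ≤ 1/2` because each term has more than
`2 log₂ n` variables. Hence `OPT_A ≥ m/2`.
-/

section Uniform

variable {n : ℕ}

lemma prodWeight_half (x : Fin n → Bool) :
    prodWeight n (fun _ => 1 / 2) x = (1 / 2 : ℝ) ^ n := by
  simp only [prodWeight]
  norm_num
  rw [one_div, inv_pow]

lemma card_forall_true_mul_two_pow (S : Finset (Fin n)) :
    #{x : Fin n → Bool | ∀ i ∈ S, x i = true} * 2 ^ #S = 2 ^ n := by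
  have hpi : ({x : Fin n → Bool | ∀ i ∈ S, x i = true} : Finset _) =
      Fintype.piFinset fun i => if i ∈ S then {true} else univ := by
    ext x
    simp only [mem_filter, mem_univ, true_and, Fintype.mem_piFinset]
    refine ⟨fun h i => ?_, fun h i hi => by simpa [hi] using h i⟩
    by_cases hi : i ∈ S <;> simp [hi, h]
  have h2S : 2 ^ #S = ∏ i, if i ∈ S then 2 else 1 := by
    rw [Fintype.prod_ite_mem, prod_const]
  have hfac : ∀ i : Fin n, #(if i ∈ S then {true} else univ) * (if i ∈ S then 2 else 1) = 2 := by
    intro i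
    split_ifs <;> rfl
  rw [hpi, Fintype.card_piFinset, h2S, ← prod_mul_distrib, prod_congr rfl fun i _ => hfac i,
    prod_const, card_univ, Fintype.card_fin]

lemma naExpCost_half {f : (Fin n → Bool) → Bool} (c : Fin n → ℝ) (π : Equiv.Perm (Fin n)) :
    naExpCost n f c (fun _ => 1 / 2) π = (∑ x, naCost n f c π x) / 2 ^ n := by
  simp only [naExpCost, prodWeight_half, one_div_pow, one_div_mul_eq_div, sum_div]

lemma adExpCost_half (c : Fin n → ℝ) (t : DecTree n) :
    adExpCost n c (fun _ => 1 / 2) t = (∑ x, t.costOn c x) / 2 ^ n := by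
  simp only [adExpCost, prodWeight_half, one_div_pow, one_div_mul_eq_div, sum_div]

end Uniform

lemma sum_eq_sum_range_card_lt {α : Type*} (s : Finset α) (g : α → ℕ) {N : ℕ}
    (hg : ∀ a ∈ s, g a ≤ N) : ∑ a ∈ s, g a = ∑ t ∈ range N, #{a ∈ s | t < g a} := by
  have hlayer : ∀ a ∈ s, g a = #((range N).bipartiteAbove (fun a t => t < g a) a) := by
    intro a ha
    refine (card_range _).symm.trans (congrArg card ?_)
    ext t
    simp only [mem_range, mem_bipartiteAbove]
    have := hg a ha
    omega
  rw [sum_congr rfl hlayer, sum_card_bipartiteAbove_eq_sum_card_bipartiteBelow]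
  rfl

lemma sum_range_le_of_le_geom {a : ℕ → ℝ} {M : ℝ} (h0 : ∀ t, 0 ≤ a t) (h1 : ∀ t, a t ≤ 1)
    (hM : ∀ t, a t ≤ M * (1 / 2) ^ t) (N s : ℕ) :
    ∑ t ∈ range N, a t ≤ s + 2 * M * (1 / 2) ^ s := by
  have hM0 : 0 ≤ M := by simpa using (h0 0).trans (hM 0)
  calc ∑ t ∈ range N, a t ≤ ∑ t ∈ range (s + N), a t :=
        sum_le_sum_of_subset_of_nonneg (range_subset_range.mpr (by omega)) fun t _ _ => h0 t
    _ = ∑ t ∈ range s, a t + ∑ k ∈ range N, a (s + k) := sum_range_add a s N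
    _ ≤ ∑ _t ∈ range s, 1 + ∑ k ∈ range N, M * (1 / 2) ^ s * (1 / 2) ^ k := by
        gcongr with t _ k _
        · exact h1 t
        · rw [mul_assoc, ← pow_add]; exact hM _
    _ ≤ s + M * (1 / 2) ^ s * 2 := by
        rw [← mul_sum, sum_const, card_range, nsmul_one]
        gcongr
        exact sum_geometric_two_le N
    _ = s + 2 * M * (1 / 2) ^ s := by ring

lemma pow_two_lt_two_pow_of_two_mul_logb_lt {n k : ℕ} (hn : 0 < n)
    (h : 2 * Real.logb 2 n < k) : n ^ 2 < 2 ^ k := by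
  have hpow : ((n : ℝ)) ^ 2 = (2 : ℝ) ^ (2 * Real.logb 2 n) := by
    rw [mul_comm, Real.rpow_mul zero_le_two, Real.rpow_logb two_pos one_lt_two.ne'
      (by exact_mod_cast hn), Real.rpow_two]
  have : ((n : ℝ)) ^ 2 < (2 : ℝ) ^ k := by
    rw [hpow, ← Real.rpow_natCast]
    exact Real.rpow_lt_rpow_of_exponent_lt one_lt_two h
  exact_mod_cast this

lemma three_le_of_pow_two_lt_two_pow {n k : ℕ} (hn : 2 ≤ n) (h : n ^ 2 < 2 ^ k) : 3 ≤ k := by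
  have : 2 ^ 2 < 2 ^ k := lt_of_le_of_lt (by nlinarith) h
  have := (Nat.pow_lt_pow_iff_right (by norm_num)).mp this
  omega

section NonAdaptive

variable {n : ℕ} {f : (Fin n → Bool) → Bool}

lemma Determines.mono {S S' : Finset (Fin n)} {x : Fin n → Bool} (h : Determines n f S x)
    (hSS' : S ⊆ S') : Determines n f S' x :=
  fun x' hx' => h x' fun i hi => hx' i (hSS' hi)

lemma determines_of_forall_term {m : ℕ} {T : Fin m → Finset (Fin n)}
    (hf : ∀ x, f x = true ↔ ∃ j, ∀ i ∈ T j, x i = true) {S : Finset (Fin n)} {x : Fin n → Bool}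
    (h : ∀ j, (∃ i ∈ T j, i ∈ S ∧ x i = false) ∨ T j ⊆ S) : Determines n f S x := by
  intro x' hx'
  have hterm : ∀ j, (∀ i ∈ T j, x' i = true) ↔ ∀ i ∈ T j, x i = true := by
    intro j
    rcases h j with ⟨i, hiT, hiS, hxi⟩ | hsub
    · refine ⟨fun h' => ?_, fun h' => ?_⟩
      · simpa [hx' i hiS, hxi] using h' i hiT
      · simpa [hxi] using h' i hiT
    · exact forall₂_congr fun i hi => by rw [hx' i (hsub hi)]
  exact Bool.eq_iff_iff.mpr <| (hf x').trans <| (exists_congr hterm).trans (hf x).symm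

lemma card_prefixSet_le (π : Equiv.Perm (Fin n)) (k : ℕ) : #(prefixSet n π k) ≤ k := by
  refine (card_le_card_of_injOn (s := prefixSet n π k) (t := range k) (fun i => (π.symm i : ℕ))
    (fun i hi => mem_range.mpr (mem_filter.mp hi).2)
    fun i _ i' _ h => π.symm.injective (Fin.val_injective h)).trans_eq (card_range k)

lemma naCost_le_of_determines {π : Equiv.Perm (Fin n)} {k : ℕ} {x : Fin n → Bool}
    (h : Determines n f (prefixSet n π k) x) : naCost n f (fun _ => 1) π x ≤ k := by
  have hsteps : naSteps n f π x ≤ k := Nat.sInf_le h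
  simp only [naCost, sum_const, nsmul_eq_mul, mul_one, Nat.cast_le]
  exact (card_prefixSet_le π _).trans hsteps

lemma subset_prefixSet_sort (key : Fin n → ℕ) (c : ℕ) :
    ({i | key i < c} : Finset (Fin n)) ⊆ prefixSet n (Tuple.sort key) #{i | key i < c} := by
  intro i hi
  have hic : key i < c := (mem_filter.mp hi).2
  set σ := Tuple.sort key
  refine mem_filter.mpr ⟨mem_univ i, ?_⟩
  by_contra! hle
  have hmaps : ∀ k ∈ Iic (σ.symm i), σ k ∈ ({i | key i < c} : Finset (Fin n)) := by
    intro k hk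
    have hmono : key (σ k) ≤ key (σ (σ.symm i)) := Tuple.monotone_sort key (mem_Iic.mp hk)
    rw [Equiv.apply_symm_apply] at hmono
    exact mem_filter.mpr ⟨mem_univ _, hmono.trans_lt hic⟩
  have := card_le_card_of_injOn σ hmaps σ.injective.injOn
  rw [Fin.card_Iic] at this
  omega

lemma naCost_sort_le (key : Fin n → ℕ) {c : ℕ} {x : Fin n → Bool}
    (h : Determines n f {i | key i < c} x) :
    naCost n f (fun _ => 1) (Tuple.sort key) x ≤ #{i | key i < c} :=
  naCost_le_of_determines (Determines.mono h (subset_prefixSet_sort key c))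

lemma OPTN_le_naExpCost (c : Fin n → ℝ) (hc : ∀ i, 0 ≤ c i) (π : Equiv.Perm (Fin n)) :
    OPTN n f c (fun _ => 1 / 2) ≤ naExpCost n f c (fun _ => 1 / 2) π := by
  refine csInf_le ⟨0, ?_⟩ ⟨π, rfl⟩
  rintro _ ⟨π', rfl⟩
  rw [naExpCost_half]
  exact div_nonneg (sum_nonneg fun x _ => sum_nonneg fun i _ => hc i) (by positivity)

end NonAdaptive

namespace DecTree

variable {n : ℕ}

def pathSet : DecTree n → (Fin n → Bool) → Finset (Fin n)
  | .leaf _, _ => ∅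
  | .node i t0 t1, x => insert i (if x i then pathSet t1 x else pathSet t0 x)

lemma card_pathSet_le_costOn (t : DecTree n) (x : Fin n → Bool) :
    (#(t.pathSet x) : ℝ) ≤ t.costOn (fun _ => 1) x := by
  induction t with
  | leaf => simp [pathSet, costOn]
  | node i t0 t1 ih0 ih1 =>
    simp only [pathSet, costOn]
    refine (Nat.cast_le.mpr (card_insert_le _ _)).trans ?_
    split_ifs
    · push_cast; linarith
    · push_cast; linarith

lemma eval_eq_of_agreeOn_pathSet (t : DecTree n) {x x' : Fin n → Bool}
    (h : ∀ i ∈ t.pathSet x, x' i = x i) : t.eval x' = t.eval x := by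
  induction t with
  | leaf => rfl
  | node i t0 t1 ih0 ih1 =>
    have hi : x' i = x i := h i (mem_insert_self _ _)
    simp only [pathSet] at h
    simp only [eval, hi]
    split_ifs with hx
    · exact ih1 fun j hj => h j (mem_insert_of_mem (by simpa [hx] using hj))
    · exact ih0 fun j hj => h j (mem_insert_of_mem (by simpa [hx] using hj))

lemma exists_mem_pathSet_ne {t : DecTree n} {f : (Fin n → Bool) → Bool} (ht : t.Computes f)
    {x x' : Fin n → Bool} (hne : f x' ≠ f x) : ∃ i ∈ t.pathSet x, x' i ≠ x i := by
  by_contra! h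
  exact hne (by rw [← ht, ← ht, t.eval_eq_of_agreeOn_pathSet h])

def queryAll : List (Fin n) → ((Fin n → Bool) → Bool) → DecTree n
  | [], g => .leaf (g fun _ => false)
  | i :: l, g => .node i (queryAll l fun y => g (Function.update y i false))
      (queryAll l fun y => g (Function.update y i true))

lemma eval_queryAll (l : List (Fin n)) (g : (Fin n → Bool) → Bool) (x : Fin n → Bool) :
    (queryAll l g).eval x = g fun i => if i ∈ l then x i else false := by
  induction l generalizing g with
  | nil => simp [queryAll, eval]
  | cons a l ih =>
    simp only [queryAll, eval]
    split_ifs with h <;> rw [ih] <;> congr 1 <;> funext k <;>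
      by_cases hk : k = a <;> simp [hk, h]

lemma exists_computes (f : (Fin n → Bool) → Bool) : ∃ t : DecTree n, t.Computes f :=
  ⟨queryAll (List.finRange n) f, fun x => by simp [eval_queryAll]⟩

end DecTree

section ReadOnceDNF

variable {n m : ℕ} {T : Fin m → Finset (Fin n)} {f : (Fin n → Bool) → Bool}

lemma mul_le_of_le_card (hdisj : ∀ j k, j ≠ k → Disjoint (T j) (T k)) {k : ℕ}
    (hk : ∀ j, k ≤ #(T j)) : m * k ≤ n := by
  calc m * k = ∑ _j : Fin m, k := by simp
    _ ≤ ∑ j, #(T j) := sum_le_sum fun j _ => hk j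
    _ = #(univ.biUnion T) := (card_biUnion fun a _ b _ hab => hdisj a b hab).symm
    _ ≤ n := card_le_univ _ |>.trans_eq (Fintype.card_fin n)

lemma card_true_le_sum (hf : ∀ x, f x = true ↔ ∃ j, ∀ i ∈ T j, x i = true) :
    #{x | f x = true} ≤ ∑ j, #{x : Fin n → Bool | ∀ i ∈ T j, x i = true} := by
  refine (card_le_card fun x hx => ?_).trans card_biUnion_le
  obtain ⟨j, hj⟩ := (hf x).mp (mem_filter.mp hx).2
  exact mem_biUnion.mpr ⟨j, mem_univ j, mem_filter.mpr ⟨mem_univ x, hj⟩⟩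

lemma two_mul_card_true_le (hn : 2 ≤ n) (hf : IsReadOnceDNF n m T f)
    (hsq : ∀ j, n ^ 2 < 2 ^ #(T j)) : 2 * #{x | f x = true} ≤ 2 ^ n := by
  have hmn : m ≤ n := by
    simpa using mul_le_of_le_card hf.2.1 fun j => (hf.1 j).card_pos
  have hterm : ∀ j, #{x : Fin n → Bool | ∀ i ∈ T j, x i = true} * n ^ 2 ≤ 2 ^ n := fun j =>
    (Nat.mul_le_mul_left _ (hsq j).le).trans (card_forall_true_mul_two_pow (T j)).le
  have hsum : #{x | f x = true} * n ^ 2 ≤ n * 2 ^ n :=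
    calc #{x | f x = true} * n ^ 2
        ≤ ∑ j, #{x : Fin n → Bool | ∀ i ∈ T j, x i = true} * n ^ 2 := by
          rw [← sum_mul]; exact Nat.mul_le_mul_right _ (card_true_le_sum hf.2.2)
      _ ≤ ∑ _j : Fin m, 2 ^ n := sum_le_sum fun j _ => hterm j
      _ = m * 2 ^ n := by simp
      _ ≤ n * 2 ^ n := Nat.mul_le_mul_right _ hmn
  have hdiv : #{x | f x = true} * n ≤ 2 ^ n :=
    Nat.le_of_mul_le_mul_right (by linarith) (by omega : 0 < n)
  nlinarith

lemma le_card_pathSet (hf : IsReadOnceDNF n m T f) {t : DecTree n} (ht : t.Computes f)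
    {x : Fin n → Bool} (hx : f x = false) : m ≤ #(t.pathSet x) := by
  have hquery : ∀ j, ∃ i ∈ t.pathSet x, i ∈ T j := by
    intro j
    -- otherwise setting term `j` to ones would change `f` but not the path followed by `x`
    let x' : Fin n → Bool := fun i => if i ∈ T j then true else x i
    have hx' : f x' ≠ f x := by
      rw [hx, ne_eq, Bool.not_eq_false, hf.2.2]
      exact ⟨j, fun i hi => if_pos hi⟩
    obtain ⟨i, hi, hne⟩ := DecTree.exists_mem_pathSet_ne ht hx'
    exact ⟨i, hi, by by_contra hiT; exact hne (if_neg hiT)⟩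
  choose w hw hwT using hquery
  simpa using card_le_card_of_injOn (s := univ) w (fun j _ => hw j) fun j _ k _ hjk => by
    by_contra hne
    exact disjoint_left.mp (hf.2.1 j k hne) (hwT j) (hjk ▸ hwT k)

lemma half_le_adExpCost (hn : 2 ≤ n) (hf : IsReadOnceDNF n m T f)
    (hsq : ∀ j, n ^ 2 < 2 ^ #(T j)) {t : DecTree n} (ht : t.Computes f) :
    (m : ℝ) / 2 ≤ adExpCost n (fun _ => 1) (fun _ => 1 / 2) t := by
  have hcost : ∀ x, (m : ℝ) * (1 - if f x = true then 1 else 0) ≤ t.costOn (fun _ => 1) x := by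
    intro x
    refine le_trans ?_ (t.card_pathSet_le_costOn x)
    cases hx : f x
    · simpa using le_card_pathSet hf ht hx
    · simp
  have htrue : (2 : ℝ) * #{x | f x = true} ≤ 2 ^ n := by
    exact_mod_cast two_mul_card_true_le hn hf hsq
  rw [adExpCost_half, le_div_iff₀ (by positivity)]
  calc (m : ℝ) / 2 * 2 ^ n ≤ m * (2 ^ n - #{x | f x = true}) := by
        nlinarith [(Nat.cast_nonneg m : (0 : ℝ) ≤ m)]
    _ = ∑ x, (m : ℝ) * (1 - if f x = true then 1 else 0) := by
        simp [← mul_sum, sum_sub_distrib]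
    _ ≤ ∑ x, t.costOn (fun _ => 1) x := sum_le_sum fun x _ => hcost x

lemma half_le_OPTA (hn : 2 ≤ n) (hf : IsReadOnceDNF n m T f)
    (hsq : ∀ j, n ^ 2 < 2 ^ #(T j)) : (m : ℝ) / 2 ≤ OPTA n f (fun _ => 1) (fun _ => 1 / 2) := by
  obtain ⟨t, ht⟩ := DecTree.exists_computes f
  refine le_csInf ⟨_, t, ht, rfl⟩ ?_
  rintro _ ⟨t', ht', rfl⟩
  exact half_le_adExpCost hn hf hsq ht'

end ReadOnceDNF

section RoundRobin

variable {n m : ℕ} (T : Fin m → Finset (Fin n))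

/-- Variables lying in no term get rank `n`, after every round. -/
noncomputable def termRank (i : Fin n) : ℕ :=
  if h : ∃ j, i ∈ T j then #{i' ∈ T h.choose | i' < i} else n

/-- Round `r` of the strategy tests the variable of rank `r` of every term. -/
noncomputable def roundRobin : Equiv.Perm (Fin n) :=
  Tuple.sort (termRank T)

/-- After `t` rounds, term `j` is refuted by a tested zero or completely tested (its ranks are
below `#(T j)`). -/
def TermDecided (x : Fin n → Bool) (t : ℕ) (j : Fin m) : Prop :=
  (∃ i ∈ T j, termRank T i < t ∧ x i = false) ∨ #(T j) ≤ t

noncomputable instance (x : Fin n → Bool) (t : ℕ) (j : Fin m) :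
    Decidable (TermDecided T x t j) := by
  unfold TermDecided; infer_instance

lemma termDecided_n (x : Fin n → Bool) (j : Fin m) : TermDecided T x n j :=
  Or.inr (card_le_univ _ |>.trans_eq (Fintype.card_fin n))

lemma exists_forall_termDecided (x : Fin n → Bool) : ∃ t, ∀ j, TermDecided T x t j :=
  ⟨n, termDecided_n T x⟩

noncomputable def rounds (x : Fin n → Bool) : ℕ :=
  Nat.find (exists_forall_termDecided T x)

variable {T} {f : (Fin n → Bool) → Bool}

lemma termRank_of_mem (hdisj : ∀ j k, j ≠ k → Disjoint (T j) (T k)) {i : Fin n} {j : Fin m}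
    (hij : i ∈ T j) : termRank T i = #{i' ∈ T j | i' < i} := by
  have h : ∃ j, i ∈ T j := ⟨j, hij⟩
  have hj : h.choose = j := by
    by_contra hne
    exact disjoint_left.mp (hdisj _ _ hne) h.choose_spec hij
  rw [termRank, dif_pos h, hj]

lemma termRank_lt_card (hdisj : ∀ j k, j ≠ k → Disjoint (T j) (T k)) {i : Fin n} {j : Fin m}
    (hij : i ∈ T j) : termRank T i < #(T j) := by
  rw [termRank_of_mem hdisj hij]
  exact card_lt_card (filter_ssubset.mpr ⟨i, hij, lt_irrefl i⟩)

lemma termRank_injOn (hdisj : ∀ j k, j ≠ k → Disjoint (T j) (T k)) (j : Fin m) :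
    Set.InjOn (termRank T) (T j) := by
  have hmono : StrictMonoOn (termRank T) (T j) := by
    intro i hi i' hi' hlt
    rw [termRank_of_mem hdisj hi, termRank_of_mem hdisj hi']
    refine card_lt_card ⟨fun k hk => ?_, fun hsub => ?_⟩
    · exact mem_filter.mpr ⟨(mem_filter.mp hk).1, (mem_filter.mp hk).2.trans hlt⟩
    · exact lt_irrefl i (mem_filter.mp (hsub (mem_filter.mpr ⟨hi, hlt⟩))).2
  exact hmono.injOn

lemma termRank_eq_of_forall_notMem {i : Fin n} (hi : ∀ j, i ∉ T j) : termRank T i = n := by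
  rw [termRank, dif_neg (not_exists.mpr hi)]

lemma le_card_filter_termRank_lt (hdisj : ∀ j k, j ≠ k → Disjoint (T j) (T k)) {j : Fin m}
    {t : ℕ} (ht : t ≤ #(T j)) : t ≤ #{i ∈ T j | termRank T i < t} := by
  have hrest : #{i ∈ T j | ¬termRank T i < t} ≤ #(T j) - t := by
    refine (card_le_card_of_injOn (t := Ico t #(T j)) (termRank T) (fun i hi => ?_)
      ((termRank_injOn hdisj j).mono fun i hi => (mem_filter.mp hi).1)).trans_eq (Nat.card_Ico _ _)
    obtain ⟨hiT, hit⟩ := mem_filter.mp hi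
    exact mem_Ico.mpr ⟨not_lt.mp hit, termRank_lt_card hdisj hiT⟩
  have := card_filter_add_card_filter_not (s := T j) (fun i => termRank T i < t)
  omega

lemma TermDecided.mono {x : Fin n → Bool} {t t' : ℕ} {j : Fin m} (h : TermDecided T x t j)
    (htt' : t ≤ t') : TermDecided T x t' j := by
  rcases h with ⟨i, hi, hit, hx⟩ | hcard
  · exact Or.inl ⟨i, hi, hit.trans_le htt', hx⟩
  · exact Or.inr (hcard.trans htt')

lemma lt_rounds_iff {x : Fin n → Bool} {t : ℕ} :
    t < rounds T x ↔ ∃ j, ¬TermDecided T x t j := by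
  rw [rounds, Nat.lt_find_iff]
  refine ⟨fun h => not_forall.mp (h t le_rfl), fun ⟨j, hj⟩ s hst hs => hj ((hs j).mono hst)⟩

lemma rounds_le (x : Fin n → Bool) : rounds T x ≤ n :=
  Nat.find_min' _ (termDecided_n T x)

lemma card_termRank_lt_le (hdisj : ∀ j k, j ≠ k → Disjoint (T j) (T k)) {t : ℕ} (ht : t ≤ n) :
    #{i | termRank T i < t} ≤ m * t := by
  have hsub : ({i | termRank T i < t} : Finset (Fin n)) ⊆
      univ.biUnion fun j => {i ∈ T j | termRank T i < t} := by
    intro i hi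
    have hit : termRank T i < t := (mem_filter.mp hi).2
    obtain ⟨j, hij⟩ : ∃ j, i ∈ T j := by
      by_contra! hnot
      rw [termRank_eq_of_forall_notMem hnot] at hit
      omega
    exact mem_biUnion.mpr ⟨j, mem_univ j, mem_filter.mpr ⟨hij, hit⟩⟩
  refine (card_le_card hsub).trans ?_
  simpa using card_biUnion_le_card_mul univ _ t fun j _ =>
    (card_le_card_of_injOn (t := range t) (termRank T)
      (fun i hi => mem_range.mpr (mem_filter.mp hi).2)
      ((termRank_injOn hdisj j).mono fun i hi => (mem_filter.mp hi).1)).trans_eq (card_range t)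

lemma determines_termRank_lt_rounds (hf : IsReadOnceDNF n m T f) (x : Fin n → Bool) :
    Determines n f {i | termRank T i < rounds T x} x := by
  refine determines_of_forall_term hf.2.2 fun j => ?_
  rcases Nat.find_spec (exists_forall_termDecided T x) j with ⟨i, hi, hit, hx⟩ | hcard
  · exact Or.inl ⟨i, hi, mem_filter.mpr ⟨mem_univ i, hit⟩, hx⟩
  · exact Or.inr fun i hi =>
      mem_filter.mpr ⟨mem_univ i, (termRank_lt_card hf.2.1 hi).trans_le hcard⟩

lemma naCost_roundRobin_le (hf : IsReadOnceDNF n m T f) (x : Fin n → Bool) :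
    naCost n f (fun _ => 1) (roundRobin T) x ≤ m * rounds T x := by
  refine (naCost_sort_le _ (determines_termRank_lt_rounds hf x)).trans ?_
  exact_mod_cast card_termRank_lt_le hf.2.1 (rounds_le x)

/-- A term still undecided after `t` rounds has its first `t` variables equal to one. -/
lemma card_not_termDecided_mul_le (hdisj : ∀ j k, j ≠ k → Disjoint (T j) (T k)) (t : ℕ)
    (j : Fin m) : #{x | ¬TermDecided T x t j} * 2 ^ t ≤ 2 ^ n := by
  by_cases ht : #(T j) ≤ t
  · simp [TermDecided, ht]
  set F : Finset (Fin n) := {i ∈ T j | termRank T i < t}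
  have hsub : ({x | ¬TermDecided T x t j} : Finset (Fin n → Bool)) ⊆
      ({x | ∀ i ∈ F, x i = true} : Finset (Fin n → Bool)) := by
    intro x hx
    have hx : ¬TermDecided T x t j := (mem_filter.mp hx).2
    simp only [TermDecided, ht, or_false, not_exists, not_and, Bool.not_eq_false] at hx
    exact mem_filter.mpr ⟨mem_univ x, fun i hi => hx i (mem_filter.mp hi).1 (mem_filter.mp hi).2⟩
  calc #{x | ¬TermDecided T x t j} * 2 ^ t
      ≤ #{x : Fin n → Bool | ∀ i ∈ F, x i = true} * 2 ^ #F := by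
        gcongr
        · norm_num
        · exact le_card_filter_termRank_lt hdisj (not_le.mp ht).le
    _ = 2 ^ n := card_forall_true_mul_two_pow F

lemma card_lt_rounds_mul_le (hdisj : ∀ j k, j ≠ k → Disjoint (T j) (T k)) (t : ℕ) :
    #{x | t < rounds T x} * 2 ^ t ≤ m * 2 ^ n := by
  have hsub : ({x | t < rounds T x} : Finset (Fin n → Bool)) ⊆
      univ.biUnion fun j => {x | ¬TermDecided T x t j} := by
    intro x hx
    obtain ⟨j, hj⟩ := lt_rounds_iff.mp (mem_filter.mp hx).2
    exact mem_biUnion.mpr ⟨j, mem_univ j, mem_filter.mpr ⟨mem_univ x, hj⟩⟩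
  calc #{x | t < rounds T x} * 2 ^ t ≤ (∑ j, #{x | ¬TermDecided T x t j}) * 2 ^ t :=
        Nat.mul_le_mul_right _ ((card_le_card hsub).trans card_biUnion_le)
    _ ≤ ∑ _j : Fin m, 2 ^ n := by
        rw [sum_mul]; exact sum_le_sum fun j _ => card_not_termDecided_mul_le hdisj t j
    _ = m * 2 ^ n := by simp

lemma naExpCost_roundRobin_le_sum (hf : IsReadOnceDNF n m T f) :
    naExpCost n f (fun _ => 1) (fun _ => 1 / 2) (roundRobin T) ≤
      m * ∑ t ∈ range n, (#{x | t < rounds T x} : ℝ) / 2 ^ n := by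
  have hrounds : ∑ x, (rounds T x : ℝ) = ∑ t ∈ range n, (#{x | t < rounds T x} : ℝ) := by
    exact_mod_cast sum_eq_sum_range_card_lt univ (rounds T) fun x _ => rounds_le x
  rw [naExpCost_half, ← sum_div, ← hrounds, mul_div_assoc', mul_sum]
  gcongr with x
  exact naCost_roundRobin_le hf x

theorem naExpCost_roundRobin_le (hn : 2 ≤ n) (hf : IsReadOnceDNF n m T f) (h3m : 3 * m ≤ n) :
    naExpCost n f (fun _ => 1) (fun _ => 1 / 2) (roundRobin T) ≤ 3 * m * Real.logb 2 n := by
  set L := Real.logb 2 n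
  set s := ⌈L⌉₊
  have hn' : (2 : ℝ) ≤ n := by exact_mod_cast hn
  have hL : 1 ≤ L := by
    rw [Real.le_logb_iff_rpow_le one_lt_two (by linarith), Real.rpow_one]; exact hn'
  have hns : (n : ℝ) ≤ 2 ^ s := by
    calc (n : ℝ) = 2 ^ L := (Real.rpow_logb two_pos one_lt_two.ne' (by linarith)).symm
      _ ≤ 2 ^ (s : ℝ) := Real.rpow_le_rpow_of_exponent_le one_le_two (Nat.le_ceil L)
      _ = 2 ^ s := Real.rpow_natCast 2 s
  have hprob : ∀ t, (#{x | t < rounds T x} : ℝ) / 2 ^ n ≤ m * (1 / 2) ^ t := by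
    intro t
    have hrw : (m : ℝ) * (1 / 2) ^ t * 2 ^ n = m * 2 ^ n / 2 ^ t := by
      rw [one_div_pow]; ring
    rw [div_le_iff₀ (by positivity), hrw, le_div_iff₀ (by positivity)]
    exact_mod_cast card_lt_rounds_mul_le hf.2.1 t
  have hsum := sum_range_le_of_le_geom (fun t => by positivity)
    (fun t => div_le_one_of_le₀ (by exact_mod_cast card_le_univ _ |>.trans_eq (by simp))
      (by positivity)) hprob n s
  have htail : 2 * (m : ℝ) * (1 / 2) ^ s ≤ 2 / 3 := by
    have h3m' : 3 * (m : ℝ) ≤ n := by exact_mod_cast h3m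
    rw [one_div_pow, mul_one_div, div_le_div_iff₀ (by positivity) (by norm_num)]
    nlinarith
  calc naExpCost n f (fun _ => 1) (fun _ => 1 / 2) (roundRobin T)
      ≤ m * ∑ t ∈ range n, (#{x | t < rounds T x} : ℝ) / 2 ^ n := naExpCost_roundRobin_le_sum hf
    _ ≤ m * (L + 1 + 2 / 3) := by
        gcongr
        exact hsum.trans (add_le_add (Nat.ceil_lt_add_one (by linarith)).le htail)
    _ ≤ 3 * m * L := by nlinarith [(Nat.cast_nonneg m : (0 : ℝ) ≤ m)]

end RoundRobin

/-- Let `n ≥ 2` and let `f` be a monotone read-once DNF with `m` terms, each containing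
more than `2·log₂ n` variables. Under unit costs and the uniform distribution:
(i) there is a non-adaptive strategy with expected cost at most `3·m·log₂ n`;
(ii) `OPT_A(f) ≥ m/2`; consequently `OPT_N(f) ≤ 6·log₂ n · OPT_A(f)`. -/
theorem stmt17 (n : ℕ) (hn : 2 ≤ n) (m : ℕ)
    (T : Fin m → Finset (Fin n)) (f : (Fin n → Bool) → Bool)
    (hf : IsReadOnceDNF n m T f)
    (hlong : ∀ j, 2 * Real.logb 2 n < ((T j).card : ℝ)) :
    (∃ π : Equiv.Perm (Fin n),
        naExpCost n f (fun _ => 1) (fun _ => 1/2) π ≤ 3 * m * Real.logb 2 n) ∧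
    (m : ℝ) / 2 ≤ OPTA n f (fun _ => 1) (fun _ => 1/2) ∧
    OPTN n f (fun _ => 1) (fun _ => 1/2) ≤
      6 * Real.logb 2 n * OPTA n f (fun _ => 1) (fun _ => 1/2) := by
  have hsq : ∀ j, n ^ 2 < 2 ^ #(T j) := fun j =>
    pow_two_lt_two_pow_of_two_mul_logb_lt (by omega) (hlong j)
  have h3m : 3 * m ≤ n := by
    simpa [mul_comm] using
      mul_le_of_le_card hf.2.1 fun j => three_le_of_pow_two_lt_two_pow hn (hsq j)
  have hNA := naExpCost_roundRobin_le hn hf h3m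
  have hA := half_le_OPTA hn hf hsq
  have hL : 0 ≤ Real.logb 2 n := Real.logb_nonneg one_lt_two (by exact_mod_cast (by omega : 1 ≤ n))
  refine ⟨⟨roundRobin T, hNA⟩, hA, ?_⟩
  calc OPTN n f (fun _ => 1) (fun _ => 1/2)
      ≤ naExpCost n f (fun _ => 1) (fun _ => 1/2) (roundRobin T) :=
        OPTN_le_naExpCost _ (fun _ => zero_le_one) _
    _ ≤ 6 * Real.logb 2 n * (m / 2) := by linarith
    _ ≤ 6 * Real.logb 2 n * OPTA n f (fun _ => 1) (fun _ => 1/2) := by gcongr
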